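/- For every natural number n ≥ 1, E(f_{n+2}, f_{n+3}, ω^2·f_{n+7}) = −((3·ω + 2)·f_{n+2} + (5·ω + 4)·f_{n+3})·((546·ω + 112)·f_{n+1}^2 + (80·ω + 17)·f_{n−1}^2 − (418·ω + 87)·f_n^2 − (418·ω + 87)·(−1)^n). -/

import Mathlib

/-!
`E` is the norm form of the cube roots of unity:
`x³ + y³ + z³ - 3xyz = (x + y + z)(x + ωy + ω²z)(x + ω²y + ωz)`.
Since `f (n + 7) = 3 f (n + 2) + 5 f (n + 3)`, for `z = ω² f (n + 7)` the factor `x + y + z` is the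
linear factor of the claim, while the other two factors reduce modulo `ω² + ω + 1` to
`(3ω + 1) x + 6ω y` and `4x + (4 - ω) y`, whose product is a quadratic form in `f (n + 2)`,
`f (n + 3)`. Cassini's identity turns that quadratic form into the second factor of the claim.
-/

/-- Fibonacci numbers as complex numbers. -/
noncomputable def f (n : ℕ) : ℂ := (Nat.fib n : ℂ)

/-- `E x y z = x^3 + y^3 + z^3 - 3xyz`. -/
def E (x y z : ℂ) : ℂ := x ^ 3 + y ^ 3 + z ^ 3 - 3 * x * y * z

theorem sq_add_self_add_one_eq_zero_of_pow_three_eq_one {R : Type*} [CommRing R] [IsDomain R]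
    {ω : R} (hω : ω ≠ 1) (hω3 : ω ^ 3 = 1) : ω ^ 2 + ω + 1 = 0 := by
  have h : (ω - 1) * (ω ^ 2 + ω + 1) = 0 := by linear_combination hω3
  exact (mul_eq_zero.mp h).resolve_left (sub_ne_zero.mpr hω)

theorem cube_add_cube_add_cube_sub_eq_mul {R : Type*} [CommRing R] {ω : R}
    (hω : ω ^ 2 + ω + 1 = 0) (x y z : R) :
    x ^ 3 + y ^ 3 + z ^ 3 - 3 * x * y * z =
      (x + y + z) * ((x + ω * y + ω ^ 2 * z) * (x + ω ^ 2 * y + ω * z)) := by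
  linear_combination
    -(x + y + z) * (x * y + x * z + (ω - 1) * (y ^ 2 + z ^ 2) + (ω ^ 2 - ω + 1) * y * z) * hω

lemma E_sq_mul_three_mul_add_five_mul {ω : ℂ} (hω : ω ^ 2 + ω + 1 = 0) (x y : ℂ) :
    E x y (ω ^ 2 * (3 * x + 5 * y)) =
      -(((3 * ω + 2) * x + (5 * ω + 4) * y) *
        ((12 * ω + 4) * x ^ 2 + (38 * ω + 7) * x * y + (30 * ω + 6) * y ^ 2)) := by
  have h₀ : x + y + ω ^ 2 * (3 * x + 5 * y) = -((3 * ω + 2) * x + (5 * ω + 4) * y) := by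
    linear_combination (3 * x + 5 * y) * hω
  have h₁ : x + ω * y + ω ^ 2 * (ω ^ 2 * (3 * x + 5 * y)) = (3 * ω + 1) * x + 6 * ω * y := by
    linear_combination (ω ^ 2 - ω) * (3 * x + 5 * y) * hω
  have h₂ : x + ω ^ 2 * y + ω * (ω ^ 2 * (3 * x + 5 * y)) = 4 * x + (4 - ω) * y := by
    linear_combination (y + (ω - 1) * (3 * x + 5 * y)) * hω
  have h₃ : ((3 * ω + 1) * x + 6 * ω * y) * (4 * x + (4 - ω) * y) =
      (12 * ω + 4) * x ^ 2 + (38 * ω + 7) * x * y + (30 * ω + 6) * y ^ 2 := by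
    linear_combination (-3 * x * y - 6 * y ^ 2) * hω
  rw [E, cube_add_cube_add_cube_sub_eq_mul hω, h₀, h₁, h₂, h₃, neg_mul]

lemma f_add_two (n : ℕ) : f (n + 2) = f n + f (n + 1) := by
  simp [f, Nat.fib_add_two]

lemma f_add_seven (n : ℕ) : f (n + 7) = 3 * f (n + 2) + 5 * f (n + 3) := by
  simp only [f, Nat.fib_add_two, Nat.cast_add]
  ring

lemma f_succ_mul_f_pred_sub_f_sq {n : ℕ} (hn : 1 ≤ n) :
    f (n + 1) * f (n - 1) - f n ^ 2 = (-1) ^ n := by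
  have h := Int.fib_succ_mul_fib_pred_sub_fib_sq n
  rw [← Nat.cast_pred hn, ← Nat.cast_succ, Int.fib_natCast, Int.fib_natCast, Int.fib_natCast,
    Int.natAbs_natCast] at h
  unfold f
  exact_mod_cast h

lemma f_quadratic_form_eq (ω : ℂ) {n : ℕ} (hn : 1 ≤ n) :
    (12 * ω + 4) * f (n + 2) ^ 2 + (38 * ω + 7) * f (n + 2) * f (n + 3) +
        (30 * ω + 6) * f (n + 3) ^ 2 =
      (546 * ω + 112) * f (n + 1) ^ 2 + (80 * ω + 17) * f (n - 1) ^ 2 -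
        (418 * ω + 87) * f n ^ 2 - (418 * ω + 87) * (-1 : ℂ) ^ n := by
  obtain ⟨m, rfl⟩ := Nat.exists_eq_add_of_le' hn
  rw [← f_succ_mul_f_pred_sub_f_sq hn, Nat.add_sub_cancel, f_add_two (m + 2), f_add_two (m + 1),
    f_add_two m]
  ring

theorem stmt14 (ω : ℂ) (hω : ω ≠ 1) (hω3 : ω ^ 3 = 1) (n : ℕ) (hn : 1 ≤ n) :
    E (f (n + 2)) (f (n + 3)) (ω ^ 2 * f (n + 7)) =
      -(((3 * ω + 2) * f (n + 2) + (5 * ω + 4) * f (n + 3)) *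
        ((546 * ω + 112) * f (n + 1) ^ 2 + (80 * ω + 17) * f (n - 1) ^ 2 -
          (418 * ω + 87) * f n ^ 2 - (418 * ω + 87) * (-1 : ℂ) ^ n)) := by
  rw [f_add_seven, E_sq_mul_three_mul_add_five_mul
    (sq_add_self_add_one_eq_zero_of_pow_three_eq_one hω hω3), f_quadratic_form_eq ω hn]
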